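/- Let Γ be a finite connected graph with n edges and loop number ℓ_Γ (cycle rank), and let P_Γ ⊂ ℝⁿ be the Minkowski sum of SP_Γ (convex hull of incidence vectors of complements of spanning trees) and E_n (convex hull of 0, e₁, ..., e_n). Then P_Γ equals the polytope P'_Γ defined by the inequalities ⟨1_γ, x⟩ ≥ ℓ_γ for every subgraph γ ⊆ Γ, together with ⟨1_Γ, x⟩ ≤ ℓ_Γ + 1. -/

import Mathlib

open scoped Classical

/-- A finite multigraph on vertex type `V` with edge type `E` is given by an
endpoint map `G : E → Sym2 V`. -/
structure Subgraph {V E : Type} [Fintype V] [Fintype E] [DecidableEq V] [DecidableEq E]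
    (G : E → Sym2 V) where
  verts : Finset V
  edges : Finset E
  incl : ∀ e ∈ edges, ∀ v ∈ G e, v ∈ verts

variable {V E : Type} [Fintype V] [Fintype E] [DecidableEq V] [DecidableEq E]

/-- Number of connected components of a subgraph. -/
noncomputable def comps (G : E → Sym2 V) (H : Subgraph G) : ℕ :=
  Nat.card (Quot fun a b : {v : V // v ∈ H.verts} => ∃ e ∈ H.edges, G e = s(a.1, b.1))

/-- Cycle rank (first Betti number) `ℓ(H) = |E(H)| - |V(H)| + c(H)`. -/
noncomputable def cycleRank (G : E → Sym2 V) (H : Subgraph G) : ℤ :=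
  (H.edges.card : ℤ) - (H.verts.card : ℤ) + (comps G H : ℤ)

/-- The spanning subgraph with all vertices and edge set `S`. -/
def spanningSub (G : E → Sym2 V) (S : Finset E) : Subgraph G where
  verts := Finset.univ
  edges := S
  incl := fun _ _ v _ => Finset.mem_univ v

/-- `T` is (the edge set of) a spanning tree of `G`. -/
noncomputable def IsSpanningTree (G : E → Sym2 V) (T : Finset E) : Prop :=
  T.card + 1 = Fintype.card V ∧ comps G (spanningSub G T) = 1

/-- The graph `G` is connected. -/
noncomputable def GraphConnected (G : E → Sym2 V) : Prop :=
  comps G (spanningSub G Finset.univ) = 1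

/-- Real incidence vector of a set of edges. -/
def ind (S : Finset E) : E → ℝ := fun e => if e ∈ S then 1 else 0

/-- Integer incidence vector of a set of edges. -/
def indZ (S : Finset E) : E → ℤ := fun e => if e ∈ S then 1 else 0

open scoped Pointwise

/-! Every vertex `1_{Tᶜ} + v` of `P_Γ` lies in `P'_Γ`: for a spanning tree `T`, removing the
edges of `γ` outside `T` leaves a forest, so `ℓ_γ ≤ |γ \ T| ≤ ⟨1_γ, 1_{Tᶜ}⟩`, while
`|Tᶜ| = ℓ_Γ`. Conversely, `P_Γ` is closed and convex, so a point `x ∈ P'_Γ` lies in it as soon as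
every linear functional `c` is at least as large at some vertex as at `x`. Run Kruskal's
algorithm in increasing order of `c`; the rejected edges `D` form the complement of a spanning
tree, and every tail `B` of the order satisfies `ℓ(B) = |D ∩ B|`. Abel summation against the
constraints `x(B) ≥ ℓ(B)` gives `⟨c, x⟩ ≤ c(D) + c_max (x(Γ) - ℓ_Γ)`, and since
`0 ≤ x(Γ) - ℓ_Γ ≤ 1` the vertex `1_D + e_max` (or `1_D` when `c ≤ 0`) does at least as well. -/

open Finset Relation

section QuotCard

variable {α : Type*} {r r' : α → α → Prop}

theorem Quot.mapRight_surjective (h : ∀ a b, r a b → r' a b) :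
    Function.Surjective (Quot.mapRight h) :=
  Quot.ind fun a => ⟨Quot.mk r a, rfl⟩

theorem Nat.card_quot_le_of_le [Finite α] (h : ∀ a b, r a b → r' a b) :
    Nat.card (Quot r') ≤ Nat.card (Quot r) :=
  Nat.card_le_card_of_surjective _ (Quot.mapRight_surjective h)

theorem Relation.EqvGen.of_or_pair {p q : α} (hr' : ∀ a b, r' a b ↔ r a b ∨ s(a, b) = s(p, q))
    {x y : α} (h : EqvGen r' x y) :
    EqvGen r x y ∨ (EqvGen r x p ∧ EqvGen r q y) ∨ (EqvGen r x q ∧ EqvGen r p y) := by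
  induction h with
  | rel a b hab =>
    rcases (hr' a b).1 hab with h | h
    · exact .inl (.rel _ _ h)
    · rcases Sym2.eq_iff.1 h with ⟨rfl, rfl⟩ | ⟨rfl, rfl⟩
      exacts [.inr (.inl ⟨.refl _, .refl _⟩), .inr (.inr ⟨.refl _, .refl _⟩)]
  | refl a => exact .inl (.refl a)
  | symm a b _ ih => grind [EqvGen.symm]
  | trans a b c _ _ ih1 ih2 => grind [EqvGen.trans, EqvGen.symm]

theorem Nat.card_quot_eq_of_or_pair_of_eqvGen {p q : α}
    (hr' : ∀ a b, r' a b ↔ r a b ∨ s(a, b) = s(p, q)) (hpq : EqvGen r p q) :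
    Nat.card (Quot r') = Nat.card (Quot r) := by
  have hle : ∀ a b, r a b → r' a b := fun a b h => (hr' a b).2 (.inl h)
  refine (Nat.card_eq_of_bijective _ ⟨?_, Quot.mapRight_surjective hle⟩).symm
  rintro ⟨a⟩ ⟨b⟩ hab
  apply Quot.eqvGen_sound
  rcases (Quot.eqvGen_exact hab).of_or_pair hr' with h | ⟨hap, hqb⟩ | ⟨haq, hpb⟩
  exacts [h, (hap.trans _ _ _ hpq).trans _ _ _ hqb, (haq.trans _ _ _ hpq.symm).trans _ _ _ hpb]

theorem Nat.card_quot_eq_card_quot_of_or_pair_add_one [Finite α] {p q : α}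
    (hr' : ∀ a b, r' a b ↔ r a b ∨ s(a, b) = s(p, q)) (hpq : ¬ EqvGen r p q) :
    Nat.card (Quot r) = Nat.card (Quot r') + 1 := by
  have hle : ∀ a b, r a b → r' a b := fun a b h => (hr' a b).2 (.inl h)
  have hne : Quot.mk r p ≠ Quot.mk r q := fun h => hpq (Quot.eqvGen_exact h)
  -- Every class except that of `q` survives; the class of `q` merges into that of `p`.
  have hbij : Function.Bijective
      fun u : {u : Quot r // u ≠ Quot.mk r q} => Quot.mapRight hle u.1 := by
    refine ⟨?_, ?_⟩
    · rintro ⟨⟨a⟩, ha⟩ ⟨⟨b⟩, hb⟩ hab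
      rcases (Quot.eqvGen_exact hab).of_or_pair hr' with h | ⟨-, hqb⟩ | ⟨haq, -⟩
      · exact Subtype.ext (Quot.eqvGen_sound h)
      · exact absurd (Quot.eqvGen_sound hqb).symm hb
      · exact absurd (Quot.eqvGen_sound haq) ha
    · rintro ⟨a⟩
      by_cases haq : Quot.mk r a = Quot.mk r q
      · refine ⟨⟨Quot.mk r p, hne⟩, Quot.sound ((hr' p q).2 (.inr rfl)) |>.trans ?_⟩
        exact congrArg (Quot.mapRight hle) haq.symm
      · exact ⟨⟨_, haq⟩, rfl⟩
  rw [← Nat.card_eq_of_bijective _ hbij, ← Finite.card_option,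
    Nat.card_congr (Equiv.optionSubtypeNe _)]

theorem Nat.card_quot_eq_card_quot_subtype_add [Finite α] {P : α → Prop}
    (hP : ∀ a b, r a b → P a ∧ P b) :
    Nat.card (Quot r) = Nat.card (Quot fun a b : Subtype P => r a b) + Nat.card {a // ¬ P a} := by
  set rP : Subtype P → Subtype P → Prop := fun a b => r a b
  let g (a : α) : Quot rP ⊕ {a // ¬ P a} :=
    if h : P a then .inl (Quot.mk _ ⟨a, h⟩) else .inr ⟨a, h⟩
  have hg : ∀ a b, r a b → g a = g b := by
    intro a b hab
    obtain ⟨ha, hb⟩ := hP a b hab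
    simp only [g, dif_pos ha, dif_pos hb]
    exact congrArg _ (Quot.sound hab)
  let e : Quot r ≃ Quot rP ⊕ {a // ¬ P a} :=
    { toFun := Quot.lift g hg
      invFun := Sum.elim (Quot.lift (fun a => Quot.mk r a.1) fun _ _ h => Quot.sound h)
        (Quot.mk r ·.1)
      left_inv := by rintro ⟨a⟩; by_cases ha : P a <;> simp [g, ha]
      right_inv := by rintro (⟨⟨a, ha⟩⟩ | ⟨a, ha⟩) <;> simp [g, ha] }
  rw [Nat.card_congr e, Nat.card_sum]

end QuotCard

section Graph

variable {V E : Type*}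

def edgeRel (G : E → Sym2 V) (S : Finset E) (a b : V) : Prop := ∃ e ∈ S, G e = s(a, b)

noncomputable def numComponents (G : E → Sym2 V) (S : Finset E) : ℕ :=
  Nat.card (Quot (edgeRel G S))

def EndsConnected (G : E → Sym2 V) (S : Finset E) (e : E) : Prop :=
  ∀ p q, G e = s(p, q) → EqvGen (edgeRel G S) p q

variable {G : E → Sym2 V}

theorem EndsConnected.mono {S S' : Finset E} (h : S ⊆ S') {e : E} (hc : EndsConnected G S e) :
    EndsConnected G S' e :=
  fun p q hpq => (hc p q hpq).mono fun _ _ ⟨f, hf, hfab⟩ => ⟨f, h hf, hfab⟩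

theorem edgeRel_insert [DecidableEq E] {S : Finset E} {e : E} {p q : V} (he : G e = s(p, q))
    (a b : V) : edgeRel G (insert e S) a b ↔ edgeRel G S a b ∨ s(a, b) = s(p, q) := by
  simp only [edgeRel, exists_mem_insert, he, eq_comm (a := s(p, q)), or_comm]

theorem numComponents_anti [Finite V] {S S' : Finset E} (h : S ⊆ S') :
    numComponents G S' ≤ numComponents G S :=
  Nat.card_quot_le_of_le fun _ _ ⟨f, hf, hfab⟩ => ⟨f, h hf, hfab⟩

theorem numComponents_insert_of_endsConnected [DecidableEq E] {S : Finset E} {e : E}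
    (hc : EndsConnected G S e) : numComponents G (insert e S) = numComponents G S := by
  induction he : G e using Sym2.ind with | _ p q
  exact Nat.card_quot_eq_of_or_pair_of_eqvGen (edgeRel_insert he) (hc p q he)

theorem numComponents_eq_numComponents_insert_add_one [Finite V] [DecidableEq E] {S : Finset E}
    {e : E} (hc : ¬ EndsConnected G S e) :
    numComponents G S = numComponents G (insert e S) + 1 := by
  induction he : G e using Sym2.ind with | _ p q
  refine Nat.card_quot_eq_card_quot_of_or_pair_add_one (edgeRel_insert he) fun hpq => hc ?_
  intro p' q' he'
  rcases Sym2.eq_iff.1 (he.symm.trans he') with ⟨rfl, rfl⟩ | ⟨rfl, rfl⟩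
  exacts [hpq, hpq.symm]

variable [Fintype V]

theorem numComponents_empty : numComponents G ∅ = Fintype.card V := by
  rw [← Nat.card_eq_fintype_card]
  refine (Nat.card_eq_of_bijective (Quot.mk _) ⟨fun a b hab => ?_, Quot.mk_surjective⟩).symm
  refine eq_equivalence.eqvGen_iff.1 ((Quot.eqvGen_exact hab).mono fun _ _ ⟨_, he, _⟩ => ?_)
  exact absurd he (notMem_empty _)

variable (G) in
noncomputable def nullity (S : Finset E) : ℤ := #S - Fintype.card V + numComponents G S

theorem nullity_empty : nullity G ∅ = 0 := by
  simp [nullity, numComponents_empty]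

variable [DecidableEq E]

theorem nullity_insert {S : Finset E} {e : E} (he : e ∉ S) :
    nullity G (insert e S) = nullity G S + if EndsConnected G S e then 1 else 0 := by
  simp only [nullity, card_insert_of_notMem he]
  split_ifs with hc
  · rw [numComponents_insert_of_endsConnected hc]; push_cast; ring
  · rw [numComponents_eq_numComponents_insert_add_one hc]; push_cast; ring

theorem nullity_le_nullity_insert (S : Finset E) (e : E) :
    nullity G S ≤ nullity G (insert e S) := by
  by_cases he : e ∈ S
  · rw [insert_eq_of_mem he]
  · rw [nullity_insert he]; split_ifs <;> omega

theorem nullity_mono : Monotone (nullity G) := by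
  intro S S' h
  obtain ⟨T, rfl⟩ : ∃ T, S' = S ∪ T := ⟨S', (union_eq_right.2 h).symm⟩
  clear h
  induction T using Finset.induction_on with
  | empty => simp
  | insert e T _ ih => exact ih.trans (union_insert e S T ▸ nullity_le_nullity_insert _ e)

theorem nullity_le_nullity_add_card_sdiff (S F : Finset E) :
    nullity G S ≤ nullity G F + #(S \ F) := by
  have hcomp := numComponents_anti (G := G) (inter_subset_left : S ∩ F ⊆ S)
  have hcard := card_inter_add_card_sdiff S F
  have hmono := nullity_mono (G := G) (inter_subset_right : S ∩ F ⊆ F)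
  simp only [nullity] at hmono ⊢
  omega

/-- `D` is the set of edges that Kruskal's algorithm, run on `S` in increasing order of `c`,
rejects. -/
theorem exists_cobasis_sum_mul_le (c x : E → ℝ)
    (hx : ∀ S : Finset E, (nullity G S : ℝ) ≤ ∑ e ∈ S, x e) (S : Finset E) :
    ∃ D ⊆ S, nullity G S = #D ∧ numComponents G (S \ D) = numComponents G S ∧
      ∀ m, (∀ e ∈ S, c e ≤ m) →
        ∑ e ∈ S, c e * x e ≤ ∑ e ∈ D, c e + m * (∑ e ∈ S, x e - nullity G S) := by
  induction S using Finset.induction_on_max_value c with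
  | empty =>
    exact ⟨∅, subset_rfl, by simp [nullity_empty], by simp, fun _ _ => by simp [nullity_empty]⟩
  | insert a S ha hmax ih =>
    obtain ⟨D, hDS, hnull, hcomp, hbound⟩ := ih
    have hbound := hbound (c a) hmax
    have haD : a ∉ D := fun h => ha (hDS h)
    suffices ∃ D' ⊆ insert a S, nullity G (insert a S) = #D' ∧
        numComponents G (insert a S \ D') = numComponents G (insert a S) ∧
        ∑ e ∈ insert a S, c e * x e ≤
          ∑ e ∈ D', c e + c a * (∑ e ∈ insert a S, x e - nullity G (insert a S)) by
      obtain ⟨D', hD'S, hnull', hcomp', hbound'⟩ := this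
      refine ⟨D', hD'S, hnull', hcomp', fun m hm => hbound'.trans ?_⟩
      have := mul_le_mul_of_nonneg_right (hm a (mem_insert_self a S))
        (sub_nonneg.2 (hx (insert a S)))
      linarith
    rw [nullity_insert ha, sum_insert ha, sum_insert ha]
    by_cases hc : EndsConnected G S a
    · refine ⟨insert a D, insert_subset_insert a hDS, ?_, ?_, ?_⟩
      · simp [hc, hnull, card_insert_of_notMem haD]
      · rw [insert_sdiff_insert, sdiff_insert_of_notMem ha, hcomp,
          numComponents_insert_of_endsConnected hc]
      · rw [sum_insert haD, if_pos hc]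
        push_cast
        linear_combination hbound
    · refine ⟨D, hDS.trans (subset_insert a S), ?_, ?_, ?_⟩
      · simp [hc, hnull]
      · have hc' : ¬ EndsConnected G (S \ D) a := fun h => hc (h.mono sdiff_subset)
        have h1 := numComponents_eq_numComponents_insert_add_one hc
        have h2 := numComponents_eq_numComponents_insert_add_one hc'
        rw [insert_sdiff_of_notMem _ haD]
        omega
      · rw [if_neg hc]
        push_cast
        linear_combination hbound

end Graph

section Polytope

variable {V E : Type*} [Fintype V] [Fintype E] {G : E → Sym2 V}

variable (G) in
def nullityPolytope : Set (E → ℝ) :=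
  {x | (∀ S : Finset E, (nullity G S : ℝ) ≤ ∑ e ∈ S, x e) ∧ ∑ e, x e ≤ nullity G univ + 1}

theorem convex_nullityPolytope : Convex ℝ (nullityPolytope G) := by
  have hsum (S : Finset E) : IsLinearMap ℝ fun x : E → ℝ => ∑ e ∈ S, x e :=
    ⟨fun _ _ => sum_add_distrib, fun _ _ => by simp [mul_sum]⟩
  have hiInter := convex_iInter fun S => convex_halfSpace_ge (hsum S) (nullity G S : ℝ)
  rw [← Set.ofPred_forall] at hiInter
  exact hiInter.inter (convex_halfSpace_le (hsum univ) _)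

end Polytope

section Indicator

variable {E : Type} [DecidableEq E]

variable (E) in
/-- The vertices `0, e₁, …, eₙ` of `E_n`. -/
def unitSimplexVertices : Set (E → ℝ) :=
  {0} ∪ Set.range fun e => Pi.single e 1

theorem nonneg_and_sum_le_one_of_mem_unitSimplexVertices [Fintype E] {v : E → ℝ}
    (hv : v ∈ unitSimplexVertices E) : 0 ≤ v ∧ ∑ e, v e ≤ 1 := by
  rcases hv with rfl | ⟨e, rfl⟩
  · simp
  · refine ⟨fun f => ?_, by simp⟩
    by_cases h : f = e <;> simp [h]

theorem exists_mem_unitSimplexVertices_le [Fintype E] {c : E → ℝ} {t y : ℝ} (ht : t ≤ 1)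
    (h : ∀ m, (∀ e, c e ≤ m) → y ≤ m * t) :
    ∃ v ∈ unitSimplexVertices E, y ≤ c ⬝ᵥ v := by
  by_cases hpos : ∃ e, 0 < c e
  · obtain ⟨e, he⟩ := hpos
    have : Nonempty E := ⟨e⟩
    obtain ⟨e₀, he₀⟩ := Finite.exists_max c
    refine ⟨Pi.single e₀ 1, Or.inr ⟨e₀, rfl⟩, ?_⟩
    rw [dotProduct_single, mul_one]
    nlinarith [h (c e₀) he₀, he₀ e]
  · simp only [not_exists, not_lt] at hpos
    exact ⟨0, Or.inl rfl, by simpa using h 0 hpos⟩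

theorem sum_ind (S F : Finset E) : ∑ e ∈ S, ind F e = #(S ∩ F) := by
  simp [ind, sum_ite_mem]

theorem dotProduct_ind [Fintype E] (c : E → ℝ) (F : Finset E) : c ⬝ᵥ ind F = ∑ e ∈ F, c e := by
  simp [dotProduct, ind]

end Indicator

theorem dotProductEquiv_symm_dotProduct {ι : Type*} [Fintype ι] [DecidableEq ι]
    (f : Module.Dual ℝ (ι → ℝ)) (y : ι → ℝ) : (dotProductEquiv ℝ ι).symm f ⬝ᵥ y = f y := by
  rw [← dotProductEquiv_apply_apply, LinearEquiv.apply_symm_apply]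

section Subgraph

variable {G : E → Sym2 V}

theorem comps_add_card_compl (γ : Subgraph G) :
    comps G γ + #γ.vertsᶜ = numComponents G γ.edges := by
  have hP : ∀ a b, edgeRel G γ.edges a b → a ∈ γ.verts ∧ b ∈ γ.verts := fun a b ⟨e, he, hab⟩ =>
    ⟨γ.incl e he a (hab ▸ Sym2.mem_mk_left a b), γ.incl e he b (hab ▸ Sym2.mem_mk_right a b)⟩
  rw [numComponents, Nat.card_quot_eq_card_quot_subtype_add hP,
    Nat.card_eq_fintype_card (α := {v // v ∉ γ.verts}), Fintype.card_subtype_compl,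
    Fintype.card_coe, ← card_compl]
  rfl

theorem cycleRank_eq_nullity (γ : Subgraph G) :
    cycleRank G γ = nullity G γ.edges := by
  have h := comps_add_card_compl γ
  rw [card_compl] at h
  have := card_le_univ γ.verts
  simp only [cycleRank, nullity]
  omega

theorem comps_spanningSub (S : Finset E) :
    comps G (spanningSub G S) = numComponents G S := by
  simpa [spanningSub] using comps_add_card_compl (spanningSub G S)

theorem isSpanningTree_iff {T : Finset E} :
    IsSpanningTree G T ↔ nullity G T = 0 ∧ numComponents G T = 1 := by
  rw [IsSpanningTree, comps_spanningSub, nullity]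
  omega

theorem nullity_univ (hconn : GraphConnected G) :
    nullity G univ = Fintype.card E - Fintype.card V + 1 := by
  rw [GraphConnected, comps_spanningSub] at hconn
  simp [nullity, hconn]

theorem setOf_cycleRank_eq_nullityPolytope :
    {x : E → ℝ | (∀ γ : Subgraph G, (cycleRank G γ : ℝ) ≤ ∑ e ∈ γ.edges, x e) ∧
        ∑ e, x e ≤ (cycleRank G (spanningSub G univ) : ℝ) + 1} = nullityPolytope G := by
  ext x
  simp only [cycleRank_eq_nullity, nullityPolytope, Set.mem_ofPred_eq]
  exact and_congr_left' ⟨fun h S => h (spanningSub G S), fun h γ => h γ.edges⟩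

variable (G) in
def spanningTreeComplements : Set (E → ℝ) :=
  {x | ∃ T, IsSpanningTree G T ∧ x = ind Tᶜ}

variable (G) in
def graphPolytope : Set (E → ℝ) :=
  convexHull ℝ (spanningTreeComplements G) + convexHull ℝ (unitSimplexVertices E)

theorem convex_graphPolytope : Convex ℝ (graphPolytope G) :=
  (convex_convexHull ℝ _).add (convex_convexHull ℝ _)

theorem isClosed_graphPolytope : IsClosed (graphPolytope G) := by
  have hA : (spanningTreeComplements G).Finite :=
    (Set.finite_range fun T : Finset E => ind Tᶜ).subset fun _ ⟨T, _, hx⟩ => ⟨T, hx.symm⟩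
  have hB : (unitSimplexVertices E).Finite := (Set.finite_singleton 0).union (Set.finite_range _)
  exact ((hA.isCompact_convexHull (𝕜 := ℝ)).add (hB.isCompact_convexHull (𝕜 := ℝ))).isClosed

theorem add_mem_graphPolytope {T : Finset E} (hT : IsSpanningTree G T)
    {v : E → ℝ} (hv : v ∈ unitSimplexVertices E) : ind Tᶜ + v ∈ graphPolytope G :=
  Set.add_mem_add (subset_convexHull ℝ _ ⟨T, hT, rfl⟩) (subset_convexHull ℝ _ hv)

theorem add_mem_nullityPolytope (hconn : GraphConnected G) {T : Finset E}
    (hT : IsSpanningTree G T) {v : E → ℝ} (hv : v ∈ unitSimplexVertices E) :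
    ind Tᶜ + v ∈ nullityPolytope G := by
  obtain ⟨hv0, hv1⟩ := nonneg_and_sum_le_one_of_mem_unitSimplexVertices hv
  rw [isSpanningTree_iff] at hT
  refine ⟨fun S => ?_, ?_⟩
  · have h := nullity_le_nullity_add_card_sdiff (G := G) S T
    rw [hT.1, zero_add] at h
    calc (nullity G S : ℝ) ≤ #(S \ T) := by exact_mod_cast h
      _ = ∑ e ∈ S, ind Tᶜ e := by rw [sum_ind, sdiff_eq_inter_compl]
      _ ≤ ∑ e ∈ S, (ind Tᶜ + v) e := sum_le_sum fun e _ => le_add_of_nonneg_right (hv0 e)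
  · have hcard : (#Tᶜ : ℤ) = nullity G univ := by
      have := card_le_univ T
      rw [nullity_univ hconn, card_compl]
      simp only [nullity] at hT
      omega
    simp only [Pi.add_apply, sum_add_distrib, sum_ind, univ_inter]
    rw [← Int.cast_natCast, hcard]
    linarith

theorem graphPolytope_subset_nullityPolytope (hconn : GraphConnected G) :
    graphPolytope G ⊆ nullityPolytope G := by
  rw [graphPolytope, ← convexHull_add]
  refine convexHull_min ?_ convex_nullityPolytope
  rintro _ ⟨_, ⟨T, hT, rfl⟩, v, hv, rfl⟩
  exact add_mem_nullityPolytope hconn hT hv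

theorem exists_spanningTree_dotProduct_le (hconn : GraphConnected G)
    {x : E → ℝ} (hx : x ∈ nullityPolytope G) (c : E → ℝ) :
    ∃ T, IsSpanningTree G T ∧ ∃ v ∈ unitSimplexVertices E, c ⬝ᵥ x ≤ c ⬝ᵥ (ind Tᶜ + v) := by
  obtain ⟨D, -, hnull, hcomp, hbound⟩ := exists_cobasis_sum_mul_le c x hx.1 univ
  have hcompT : numComponents G Dᶜ = 1 := by
    rw [compl_eq_univ_sdiff, hcomp, ← comps_spanningSub]
    exact hconn
  refine ⟨Dᶜ, isSpanningTree_iff.2 ⟨?_, hcompT⟩, ?_⟩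
  · rw [nullity_univ hconn] at hnull
    simp only [nullity, card_compl, hcompT, Nat.cast_sub (card_le_univ D)]
    omega
  obtain ⟨v, hv, hle⟩ := exists_mem_unitSimplexVertices_le (c := c) (y := c ⬝ᵥ x - ∑ e ∈ D, c e)
    (by linarith [hx.2]) fun m hm => sub_le_iff_le_add'.2 (hbound m fun e _ => hm e)
  refine ⟨v, hv, ?_⟩
  rw [compl_compl, dotProduct_add, dotProduct_ind]
  linarith

end Subgraph

/-- The graph polytope `P_Γ = SP_Γ + E_n` (Minkowski sum of the spanning-tree polytope
and the convex hull of `0, e₁, …, e_n`) coincides with the polytope `P'_Γ` cut out by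
the inequalities `⟨1_γ, x⟩ ≥ ℓ_γ` for all subgraphs `γ ⊆ Γ` and `⟨1_Γ, x⟩ ≤ ℓ_Γ + 1`. -/
theorem graph_polytope_eq (G : E → Sym2 V) (hconn : GraphConnected G) :
    (convexHull ℝ {x : E → ℝ | ∃ T, IsSpanningTree G T ∧ x = ind Tᶜ}) +
        convexHull ℝ ({0} ∪ Set.range fun e : E => (Pi.single e 1 : E → ℝ)) =
      {x : E → ℝ |
        (∀ γ : Subgraph G, (cycleRank G γ : ℝ) ≤ ∑ e ∈ γ.edges, x e) ∧
        ∑ e, x e ≤ (cycleRank G (spanningSub G Finset.univ) : ℝ) + 1} := by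
  change graphPolytope G = _
  rw [setOf_cycleRank_eq_nullityPolytope]
  refine (graphPolytope_subset_nullityPolytope hconn).antisymm fun x hx => ?_
  rw [← iInter_halfSpaces_eq convex_graphPolytope isClosed_graphPolytope]
  refine Set.mem_iInter.2 fun f => ?_
  obtain ⟨T, hT, v, hv, hle⟩ :=
    exists_spanningTree_dotProduct_le hconn hx ((dotProductEquiv ℝ E).symm f.toLinearMap)
  refine ⟨ind Tᶜ + v, add_mem_graphPolytope hT hv, ?_⟩
  rwa [dotProductEquiv_symm_dotProduct, dotProductEquiv_symm_dotProduct] at hle
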